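/- arXiv:2406.14618 — 2 statements merged into one kernel-verified Lean document; each statement's English description precedes it below -/
import Mathlib

section
/- The minimum over x ∈ [−1, 1) of the function 2·arccos(x)/(π(1−x)) is attained at the unique solution of the stationarity condition and its value α_GW satisfies 0.878 < α_GW < 0.879. -/
open Real

private lemma my_sin_lb (x : ℝ) (hx : 0 ≤ x) : x - x^3/6 ≤ Real.sin x := by
  have hd : ∀ y : ℝ, HasDerivAt (fun z : ℝ => Real.sin z - z + z^3/6)
      (Real.cos y - 1 + 3*y^2/6) y := fun y =>
    ((Real.hasDerivAt_sin y).sub (hasDerivAt_id y)).add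
      ((hasDerivAt_pow 3 y).div_const 6 |>.congr_deriv (by ring))
  have hmono : Monotone (fun z : ℝ => Real.sin z - z + z^3/6) := by
    apply monotone_of_deriv_nonneg (fun y => (hd y).differentiableAt)
    intro y
    rw [(hd y).deriv]
    nlinarith [Real.one_sub_sq_div_two_le_cos (x := y)]
  have h0 := hmono hx
  simp at h0
  linarith

private lemma my_cos_ub (x : ℝ) (hx : 0 ≤ x) : Real.cos x ≤ 1 - x^2/2 + x^4/24 := by
  have hd : ∀ y : ℝ, HasDerivAt (fun z : ℝ => 1 - z^2/2 + z^4/24 - Real.cos z)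
      (-(2*y/2) + 4*y^3/24 + Real.sin y) y := fun y =>
    ((((hasDerivAt_const y (1:ℝ)).sub ((hasDerivAt_pow 2 y).div_const 2)).add
      ((hasDerivAt_pow 4 y).div_const 24)).sub (Real.hasDerivAt_cos y)).congr_deriv (by ring)
  have hmono : MonotoneOn (fun z : ℝ => 1 - z^2/2 + z^4/24 - Real.cos z) (Set.Ici 0) := by
    apply monotoneOn_of_deriv_nonneg (convex_Ici 0)
      (Continuous.continuousOn (by fun_prop))
      (fun y _ => (hd y).differentiableAt.differentiableWithinAt)
    intro y hy
    rw [(hd y).deriv]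
    simp only [interior_Ici, Set.mem_Ioi] at hy
    nlinarith [my_sin_lb y hy.le]
  have h0 := hmono (Set.self_mem_Ici) (Set.mem_Ici.2 hx) hx
  simp at h0
  linarith

private lemma my_sin_ub (x : ℝ) (hx : 0 ≤ x) : Real.sin x ≤ x - x^3/6 + x^5/120 := by
  have hd : ∀ y : ℝ, HasDerivAt (fun z : ℝ => z - z^3/6 + z^5/120 - Real.sin z)
      (1 - 3*y^2/6 + 5*y^4/120 - Real.cos y) y := fun y =>
    (((hasDerivAt_id y).sub ((hasDerivAt_pow 3 y).div_const 6)).add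
      ((hasDerivAt_pow 5 y).div_const 120)).sub (Real.hasDerivAt_sin y) |>.congr_deriv (by ring)
  have hmono : MonotoneOn (fun z : ℝ => z - z^3/6 + z^5/120 - Real.sin z) (Set.Ici 0) := by
    apply monotoneOn_of_deriv_nonneg (convex_Ici 0)
      (Continuous.continuousOn (by fun_prop))
      (fun y _ => (hd y).differentiableAt.differentiableWithinAt)
    intro y hy
    rw [(hd y).deriv]
    simp only [interior_Ici, Set.mem_Ioi] at hy
    nlinarith [my_cos_ub y hy.le]
  have h0 := hmono (Set.self_mem_Ici) (Set.mem_Ici.2 hx) hx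
  simp at h0
  linarith

private lemma key_theta (θ : ℝ) (h0 : 0 < θ) (h1 : θ ≤ π) :
    439/500 * (π * (1 - Real.cos θ)) < 2 * θ := by
  have hpi_lb : (3.141592 : ℝ) < π := Real.pi_gt_d6
  have hpi_ub : π < 3.141593 := Real.pi_lt_d6
  rcases le_or_gt θ 1.45 with hA | hA
  · have hc := Real.one_sub_sq_div_two_le_cos (x := θ)
    nlinarith
  rcases le_or_gt θ (π/2) with hB | hB
  · have hc : 0 ≤ Real.cos θ := Real.cos_nonneg_of_mem_Icc ⟨by linarith, hB⟩
    have hc1 : Real.cos θ ≤ 1 := Real.cos_le_one θ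
    nlinarith
  · set t : ℝ := (π - θ)/2 with ht
    have ht0 : 0 ≤ t := by simp [ht]; linarith
    have ht1 : t ≤ 0.7854 := by simp only [ht]; linarith
    have hθ : θ = π - 2*t := by simp [ht]; ring
    have hcos : Real.cos θ = 2 * Real.sin t ^ 2 - 1 := by
      rw [hθ, Real.cos_pi_sub, Real.cos_two_mul]
      have := Real.sin_sq_add_cos_sq t
      linarith
    have hsl := my_sin_lb t ht0
    have hL0 : 0 ≤ t - t^3/6 := by
      nlinarith [mul_nonneg ht0 (sub_nonneg.2 ht1),
        mul_nonneg (mul_nonneg ht0 ht0) (sub_nonneg.2 ht1)]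
    have hsq : (t - t^3/6)^2 ≤ Real.sin t ^ 2 := by nlinarith
    have hpoly : 0 < 61/500 * 3.141592 - 2*t + 439/500 * 3.141592 * (t - t^3/6)^2 := by
      nlinarith [sq_nonneg (t - 0.4063), sq_nonneg (t*(t - 0.4063)),
        sq_nonneg (t^2*(t - 0.4063)), mul_nonneg ht0 (sub_nonneg.2 ht1),
        sq_nonneg ((t-0.4063)*(t-0.7854))]
    have hs2 : (0:ℝ) ≤ Real.sin t ^ 2 := sq_nonneg _
    rw [hcos, hθ]
    nlinarith

private lemma cos_double' (x : ℝ) : Real.cos (2*x) = 1 - 2 * Real.sin x ^ 2 := by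
  rw [Real.cos_two_mul]
  have := Real.sin_sq_add_cos_sq x
  linarith

private lemma cos233 : Real.cos (233/100) ≤ -0.6881 := by
  have h8 : (0:ℝ) ≤ 233/800 := by norm_num
  have hsl := my_sin_lb (233/800) h8
  have hsu := my_sin_ub (233/800) h8
  have hs1 : (0.287132 : ℝ) ≤ Real.sin (233/800) := by norm_num at hsl ⊢; linarith
  have hs2 : Real.sin (233/800) ≤ 0.28715 := by norm_num at hsu ⊢; linarith
  have hc1 : Real.cos (233/400) = 1 - 2 * Real.sin (233/800) ^ 2 := by
    rw [show (233/400 : ℝ) = 2 * (233/800) by norm_num, cos_double']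
  have hc1l : (0.83508 : ℝ) ≤ Real.cos (233/400) := by rw [hc1]; nlinarith
  have hc1u : Real.cos (233/400) ≤ 0.83512 := by rw [hc1]; nlinarith
  have hc2 : Real.cos (233/200) = 2 * Real.cos (233/400) ^ 2 - 1 := by
    rw [show (233/200 : ℝ) = 2 * (233/400) by norm_num, Real.cos_two_mul]
  have hc2l : (0.39471 : ℝ) ≤ Real.cos (233/200) := by rw [hc2]; nlinarith
  have hc2u : Real.cos (233/200) ≤ 0.39486 := by rw [hc2]; nlinarith
  have hc3 : Real.cos (233/100) = 2 * Real.cos (233/200) ^ 2 - 1 := by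
    rw [show (233/100 : ℝ) = 2 * (233/200) by norm_num, Real.cos_two_mul]
  rw [hc3]; nlinarith

private lemma f_gt_878 (x : ℝ) (hx : -1 ≤ x) (h1 : x < 1) :
    (0.878 : ℝ) < 2 * Real.arccos x / (π * (1 - x)) := by
  have hθpos : 0 < Real.arccos x := Real.arccos_pos.2 h1
  have hθle : Real.arccos x ≤ π := Real.arccos_le_pi x
  have hcos : Real.cos (Real.arccos x) = x := Real.cos_arccos hx h1.le
  have hkey := key_theta (Real.arccos x) hθpos hθle
  rw [hcos] at hkey
  have hden : 0 < π * (1 - x) := mul_pos Real.pi_pos (by linarith)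
  rw [lt_div_iff₀ hden]
  calc (0.878 : ℝ) * (π * (1 - x)) = 439/500 * (π * (1 - x)) := by norm_num
    _ < 2 * Real.arccos x := hkey

/-- The Goemans–Williamson constant: the minimum over `x ∈ [-1, 1)` of
`2·arccos(x)/(π(1-x))` is attained, and its value `α_GW` satisfies
`0.878 < α_GW < 0.879`. -/
theorem goemans_williamson_constant_bounds :
    ∃ α : ℝ,
      IsLeast ((fun x : ℝ => 2 * Real.arccos x / (Real.pi * (1 - x))) ''
        Set.Ico (-1 : ℝ) 1) α ∧
      0.878 < α ∧ α < 0.879 := by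
  set f : ℝ → ℝ := fun x => 2 * Real.arccos x / (Real.pi * (1 - x)) with hf
  have hpi_lb : (3.141592 : ℝ) < π := Real.pi_gt_d6
  have hpi_ub : π < 3.141593 := Real.pi_lt_d6
  set K : Set ℝ := Set.Icc (-1 : ℝ) (9/10) with hK
  have hcont : ContinuousOn f K := by
    apply ContinuousOn.div
    · exact (continuous_const.mul Real.continuous_arccos).continuousOn
    · exact (continuous_const.mul (continuous_const.sub continuous_id)).continuousOn
    · intro x hx
      have : x ≤ 9/10 := hx.2
      exact ne_of_gt (mul_pos Real.pi_pos (by linarith))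
  obtain ⟨x₀, hx₀K, hmin⟩ := isCompact_Icc.exists_isMinOn
    ⟨-1, by constructor <;> norm_num⟩ hcont
  have hmin' : ∀ y ∈ K, f x₀ ≤ f y := fun y hy => isMinOn_iff.mp hmin y hy
  -- value at -1 is 1
  have hfm1 : f (-1) = 1 := by
    have hπ : π ≠ 0 := Real.pi_ne_zero
    simp only [hf, Real.arccos_neg_one]
    field_simp
    ring
  have hα1 : f x₀ ≤ 1 := by
    rw [← hfm1]; exact hmin' (-1) ⟨le_refl _, by norm_num⟩
  -- f x ≥ 1 for x ∈ (9/10, 1)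
  have hbig : ∀ x : ℝ, 9/10 < x → x < 1 → 1 ≤ f x := by
    intro x hx9 hx1
    have hθ0 : 0 ≤ Real.arccos x := Real.arccos_nonneg x
    have hcos : Real.cos (Real.arccos x) = x := Real.cos_arccos (by linarith) hx1.le
    have hq := Real.one_sub_sq_div_two_le_cos (x := Real.arccos x)
    rw [hcos] at hq
    have hden : 0 < π * (1 - x) := mul_pos Real.pi_pos (by linarith)
    have hu0 : (0:ℝ) < 1 - x := by linarith
    have hu1 : 1 - x ≤ 1/10 := by linarith
    have hθsq : 2*(1-x) ≤ Real.arccos x ^ 2 := by nlinarith [hq]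
    have h2 : π * (1-x) ≤ 2 * Real.arccos x := by
      by_contra hcon
      push_neg at hcon
      have h3 : (2*Real.arccos x)^2 < (π*(1-x))^2 :=
        pow_lt_pow_left₀ hcon (by linarith) (by norm_num)
      have hπsq : π^2 ≤ 9.8697 := by nlinarith [Real.pi_pos]
      nlinarith [h3, hθsq, hu0, hu1, hπsq, mul_pos hu0 hu0]
    rw [hf, le_div_iff₀ hden]
    linarith
  refine ⟨f x₀, ⟨⟨x₀, ⟨hx₀K.1, by have := hx₀K.2; linarith⟩, rfl⟩, ?_⟩, ?_, ?_⟩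
  · rintro y ⟨x, hx, rfl⟩
    rcases le_or_gt x (9/10) with hle | hgt
    · exact hmin' x ⟨hx.1, hle⟩
    · exact le_trans hα1 (hbig x hgt hx.2)
  · exact f_gt_878 x₀ hx₀K.1 (by have := hx₀K.2; linarith)
  · -- upper bound via x₁ = cos 2.33
    have hc := cos233
    have hm1 : (-1 : ℝ) ≤ Real.cos (233/100) := Real.neg_one_le_cos _
    have hx₁K : Real.cos (233/100) ∈ K := ⟨hm1, by norm_num at hc ⊢; linarith⟩
    have harc : Real.arccos (Real.cos (233/100)) = 233/100 :=
      Real.arccos_cos (by norm_num) (by linarith)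
    have h1c : (1.6881 : ℝ) ≤ 1 - Real.cos (233/100) := by norm_num at hc ⊢; linarith
    have hden : 0 < π * (1 - Real.cos (233/100)) :=
      mul_pos Real.pi_pos (by norm_num at hc ⊢; linarith)
    have hfx₁ : f (Real.cos (233/100)) < 0.879 := by
      rw [hf]
      simp only [harc]
      rw [div_lt_iff₀ hden]
      nlinarith
    exact lt_of_le_of_lt (hmin' _ hx₁K) hfx₁
end

section
/- For the symmetric-elimination function G(a_t) = Σ over a_{t+1},...,a_p,a_0 of (a_0/2)·⟨a_t|e^{iβ_t X}|a_{t+1}⟩·⟨a_{t+1}|e^{−iβ_t X}|−a_t⟩·∏_{k=t+1}^{p−1} |⟨a_k|e^{iβ_{k+1}X}|a_{k+1}⟩|²·|⟨a_p|e^{iβ_p X}|a_0⟩|², one has G(a_t) = −(a_t/2)·i·sin(2β_t)·cos(2β_{t+1})···cos(2β_p), for a_t ∈ {−1,1}. -/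
open Finset

/-- Matrix element `⟨a| e^{iβX} |b⟩` for `a, b ∈ {−1,1}` (encoded as `Bool`). -/
noncomputable def mixAmp (β : ℝ) (a b : Bool) : ℂ :=
  if a = b then (Real.cos β : ℂ) else Complex.I * (Real.sin β : ℂ)

/-- The spin value `±1` of a boolean. -/
def sgn (b : Bool) : ℝ := if b then 1 else -1

/-- The symmetric-elimination function
`G(a_t) = Σ_{a_{t+1},…,a_p,a_0} (a_0/2)·⟨a_t|e^{iβ_t X}|a_{t+1}⟩·⟨a_{t+1}|e^{−iβ_t X}|−a_t⟩
·∏ |⟨a_k|e^{iβ_k X}|a_{k+1}⟩|²·|⟨a_p|e^{iβ_p X}|a_0⟩|²`, where the summed chain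
`(a_{t+1},…,a_p,a_0)` is encoded as `a : Fin (p−t+1) → Bool` with `a_0` in last
position. -/
noncomputable def Gelim (p t : ℕ) (β : ℕ → ℝ) (at_ : Bool) : ℂ :=
  ∑ a : Fin (p - t + 1) → Bool,
    ((sgn (a (Fin.last (p - t))) / 2 : ℝ) : ℂ) *
      mixAmp (β t) at_ (a 0) * mixAmp (-(β t)) (a 0) (!at_) *
      ∏ j : Fin (p - t),
        ((‖mixAmp (β (t + 1 + (j : ℕ))) (a j.castSucc) (a j.succ)‖ ^ 2 : ℝ) : ℂ)

/-! The summand factorises along the chain `a_t → a_{t+1} → ⋯ → a_p → a_0`. The spin vector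
`b ↦ b/2` is an eigenvector of every transfer matrix `|⟨a|e^{iβX}|b⟩|²`, with eigenvalue
`cos 2β`, so summing out `a_0, a_p, …, a_{t+2}` in turn only contributes the factors
`cos 2β_k`; the final sum over `a_{t+1}` gives `−(a_t/2)·i·sin 2β_t`. -/

theorem sum_prod_transfer_of_eigenvector {α R : Type*} [Fintype α] [CommSemiring R] (n : ℕ)
    (g v : α → R) (k : Fin n → α → α → R) (μ : Fin n → R)
    (hk : ∀ j x, ∑ b, k j x b * v b = μ j * v x) :
    ∑ a : Fin (n + 1) → α, g (a 0) * (∏ j, k j (a j.castSucc) (a j.succ)) * v (a (Fin.last n)) =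
      (∏ j, μ j) * ∑ x, g x * v x := by
  induction n with
  | zero => simp [← (Equiv.funUnique (Fin 1) α).symm.sum_comp]
  | succ n ih =>
    rw [← (Fin.snocEquiv fun _ => α).sum_comp, Fintype.sum_prod_type, Finset.sum_comm]
    have hsplit (a : Fin (n + 1) → α) :
        ∑ b, g ((Fin.snoc a b : Fin (n + 2) → α) 0) *
            (∏ j, k j ((Fin.snoc a b : Fin (n + 2) → α) j.castSucc)
              ((Fin.snoc a b : Fin (n + 2) → α) j.succ)) *
            v ((Fin.snoc a b : Fin (n + 2) → α) (Fin.last (n + 1))) =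
          μ (Fin.last n) * (g (a 0) * (∏ j : Fin n, k j.castSucc (a j.castSucc) (a j.succ)) *
            v (a (Fin.last n))) := by
      simp only [Fin.prod_univ_castSucc, Fin.snoc_last, Fin.succ_last, Fin.snoc_castSucc,
        ← Fin.castSucc_zero, Fin.succ_castSucc]
      rw [mul_left_comm, ← hk, Finset.mul_sum]
      exact Finset.sum_congr rfl fun b _ => by ring
    simp only [Fin.snocEquiv_apply]
    rw [Finset.sum_congr rfl fun a _ => hsplit a, ← Finset.mul_sum, ih _ _ fun j => hk j.castSucc,
      Fin.prod_univ_castSucc]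
    ring

theorem sum_norm_mixAmp_sq_mul_sgn (β : ℝ) (x : Bool) :
    ∑ b, ((‖mixAmp β x b‖ ^ 2 : ℝ) : ℂ) * ((sgn b / 2 : ℝ) : ℂ) =
      (Real.cos (2 * β) : ℂ) * ((sgn x / 2 : ℝ) : ℂ) := by
  rw [Real.cos_two_mul']
  cases x <;>
  · simp only [Fintype.sum_bool, mixAmp, sgn, reduceIte, Bool.true_eq_false, Bool.false_eq_true,
      norm_mul, Complex.norm_real, Complex.norm_I, Real.norm_eq_abs, one_mul, sq_abs]
    push_cast
    ring

theorem sum_mixAmp_mul_mixAmp_neg_mul_sgn (β : ℝ) (x : Bool) :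
    ∑ b, mixAmp β x b * mixAmp (-β) b (!x) * ((sgn b / 2 : ℝ) : ℂ) =
      -((sgn x / 2 : ℝ) : ℂ) * Complex.I * (Real.sin (2 * β) : ℂ) := by
  rw [Real.sin_two_mul]
  cases x <;>
  · simp only [Fintype.sum_bool, mixAmp, sgn, reduceIte, Bool.true_eq_false, Bool.false_eq_true,
      Bool.not_true, Bool.not_false, Real.cos_neg, Real.sin_neg]
    push_cast
    ring

theorem Gelim_eval_general (p t : ℕ) (β : ℕ → ℝ) (at_ : Bool) :
    Gelim p t β at_ =
      -((sgn at_ / 2 : ℝ) : ℂ) * Complex.I * (Real.sin (2 * β t) : ℂ) *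
        ∏ j : Fin (p - t), ((Real.cos (2 * β (t + 1 + (j : ℕ))) : ℝ) : ℂ) := by
  have hchain := sum_prod_transfer_of_eigenvector (p - t)
    (fun x => mixAmp (β t) at_ x * mixAmp (-β t) x (!at_)) (fun b => ((sgn b / 2 : ℝ) : ℂ))
    (fun j x b => ((‖mixAmp (β (t + 1 + (j : ℕ))) x b‖ ^ 2 : ℝ) : ℂ))
    (fun j => (Real.cos (2 * β (t + 1 + (j : ℕ))) : ℂ)) fun j x => sum_norm_mixAmp_sq_mul_sgn _ x
  rw [sum_mixAmp_mul_mixAmp_neg_mul_sgn] at hchain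
  unfold Gelim
  rw [mul_comm, ← hchain]
  exact Finset.sum_congr rfl fun a _ => by ring

/-- `G(a_t) = −(a_t/2)·i·sin(2β_t)·cos(2β_{t+1})⋯cos(2β_p)` for `a_t ∈ {−1,1}`. -/
theorem Gelim_eval (p t : ℕ) (ht : t ≤ p) (β : ℕ → ℝ) (at_ : Bool) :
    Gelim p t β at_ =
      -((sgn at_ / 2 : ℝ) : ℂ) * Complex.I * (Real.sin (2 * β t) : ℂ) *
        ∏ j : Fin (p - t), ((Real.cos (2 * β (t + 1 + (j : ℕ))) : ℝ) : ℂ) :=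
  Gelim_eval_general p t β at_
end
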